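/- Let A ∈ C and let the ordered profile v′ be obtained from v by changes of the following kinds only: adding new ballots whose list consists of the single candidate A; inserting A at an arbitrary position into some ballots not containing A; or moving A to an earlier position on some ballots containing A — in each case leaving the other candidates and their relative order on every ballot unchanged. Assume that, under both v and v′, Phragmén's ordered method has a unique minimizer in every round (no ties occur). If A is among the M candidates elected by Phragmén's ordered method on v, then A is among the M candidates elected on v′. -/

import Mathlib

open Finset

/-- The top candidate of the ballot `α` given the set `E` of already elected
candidates: the first entry of `α` not in `E` (if any). -/
def topOf {C : Type} [DecidableEq C] (E : Finset C) (α : List C) : Option C :=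
  α.find? (fun c => decide (c ∉ E))

/-- The set of voters whose ballot is currently counted for candidate `i`,
given the set `E` of already elected candidates. -/
def poCounted {C : Type} [Fintype C] [DecidableEq C] {n : ℕ}
    (b : Fin n → List C) (E : Finset C) (i : C) : Finset (Fin n) :=
  Finset.univ.filter (fun k => topOf E (b k) = some i)

/-- Phragmén's `t_i = (1 + Σ_{α∈A_i} v_α r_α)/(Σ_{α∈A_i} v_α)` for the current
loads `r` and elected set `E` (each individual ballot has weight 1). -/
def poT {C : Type} [Fintype C] [DecidableEq C] {n : ℕ}
    (b : Fin n → List C) (r : Fin n → ℚ) (E : Finset C) (i : C) : ℚ :=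
  (1 + ∑ k ∈ poCounted b E i, r k) / ((poCounted b E i).card : ℚ)

/-- The ballot loads after electing the candidates in the list `l`
(most recently elected first). -/
def poLoads {C : Type} [Fintype C] [DecidableEq C] {n : ℕ}
    (b : Fin n → List C) : List C → Fin n → ℚ
  | [], _ => 0
  | i :: l, k =>
      if topOf l.toFinset (b k) = some i then poT b (poLoads b l) l.toFinset i
      else poLoads b l k

/-- `l` (most recently elected first) is a valid sequence of elections for
Phragmén's ordered method. -/
def poValid {C : Type} [Fintype C] [DecidableEq C] {n : ℕ}
    (b : Fin n → List C) : List C → Prop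
  | [] => True
  | i :: l => poValid b l ∧ i ∉ l ∧ 0 < (poCounted b l.toFinset i).card ∧
      ∀ j : C, j ∉ l → 0 < (poCounted b l.toFinset j).card →
        poT b (poLoads b l) l.toFinset i ≤ poT b (poLoads b l) l.toFinset j

/-- `S` is a possible outcome of Phragmén's ordered method for `M` seats. -/
def POOutcome {C : Type} [Fintype C] [DecidableEq C] {n : ℕ}
    (b : Fin n → List C) (M : ℕ) (S : Finset C) : Prop :=
  ∃ l : List C, poValid b l ∧ l.length = M ∧ l.toFinset = S

/-- `α'` is obtained from `α` by a change in favour of `A`: either `α' = α`, or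
`A` is inserted into `α` at an arbitrary position (if `A ∉ α`), or `A` is moved
to an earlier (or equal) position (if `A ∈ α`); in each case the other candidates
and their relative order are unchanged. -/
def Favours {C : Type} [DecidableEq C] (A : C) (α α' : List C) : Prop :=
  α'.erase A = α.erase A ∧ (A ∈ α → A ∈ α' ∧ α'.idxOf A ≤ α.idxOf A)

/-- Phragmén's ordered method has a unique minimizer in every round (no ties occur)
during the election of `M` candidates. -/
def POUniqueRun {C : Type} [Fintype C] [DecidableEq C] {n : ℕ}
    (b : Fin n → List C) (M : ℕ) : Prop :=
  ∀ l : List C, poValid b l → l.length < M →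
    ∃! i : C, i ∉ l ∧ 0 < (poCounted b l.toFinset i).card ∧
      ∀ j : C, j ∉ l → 0 < (poCounted b l.toFinset j).card →
        poT b (poLoads b l) l.toFinset i ≤ poT b (poLoads b l) l.toFinset j

/-!
A ballot's Phragmén load is the latest election time among the candidates preceding its current
top (`poLoads_eq_maxOf`), and election times never decrease. Padding `b` with empty ballots, which
`[A]` favours, gives both profiles the same voters.

Suppose `A` is elected on `b` at time `t_A`, after the candidates `l₀`, but not on `b'`. Along the
run on `b'`, every elected candidate lies in `l₀` and was elected on `b` no later than on `b'`.
While this holds, a ballot whose `b'`-top is outside `A :: l₀` carries at least its `b`-load, and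
the total loads differ by the number of candidates of `A :: l₀` not yet elected on `b'`; by
pigeonhole one of these has ratio at most `t_A` on `b'`, so the next candidate `w` is elected at
some `t' ≤ t_A`. Let `c` be the first candidate elected on `b` later than `t'`, or `A` if there is
none before `A`. If `w` broke the invariant, it would not be elected on `b` before `c`; just before
`c` is elected there, the ballots counted for `w` on `b'` are counted for `w` with no larger loads,
so the ratio of `w` would be at most `t'`, hence at most that of `c`, and without ties `w = c`,
which is impossible. Finally, the `M` candidates elected on `b'` cannot all lie in `l₀`, which has
fewer than `M` elements.
-/

section Maximum

variable {C : Type}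

def maxOf (f : C → ℚ) : List C → ℚ
  | [] => 0
  | e :: P => max (f e) (maxOf f P)

variable {f g : C → ℚ} {P : List C}

theorem le_maxOf {e : C} (he : e ∈ P) : f e ≤ maxOf f P := by
  induction P with
  | nil => simp at he
  | cons c P ih =>
    rcases List.mem_cons.mp he with rfl | he
    · exact le_max_left _ _
    · exact (ih he).trans (le_max_right _ _)

theorem maxOf_le {t : ℚ} (h : ∀ e ∈ P, f e ≤ t) (ht : 0 ≤ t) : maxOf f P ≤ t := by
  induction P with
  | nil => exact ht
  | cons c P ih => exact max_le (h c (by simp)) (ih fun e he => h e (by simp [he]))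

theorem maxOf_mono (h : ∀ e ∈ P, f e ≤ g e) : maxOf f P ≤ maxOf g P := by
  induction P with
  | nil => exact le_rfl
  | cons c P ih => exact max_le_max (h c (by simp)) (ih fun e he => h e (by simp [he]))

theorem maxOf_congr (h : ∀ e ∈ P, f e = g e) : maxOf f P = maxOf g P :=
  (maxOf_mono fun e he => (h e he).le).antisymm (maxOf_mono fun e he => (h e he).ge)

end Maximum

section Ballot

variable {C : Type} [DecidableEq C] {E E' : Finset C} {α α' : List C} {A d j : C}

def electedPrefix (E : Finset C) (α : List C) : List C := α.takeWhile (· ∈ E)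

theorem topOf_cons (E : Finset C) (c : C) (α : List C) :
    topOf E (c :: α) = if c ∈ E then topOf E α else some c := by
  by_cases h : c ∈ E <;> simp [topOf, h]

theorem electedPrefix_cons (E : Finset C) (c : C) (α : List C) :
    electedPrefix E (c :: α) = if c ∈ E then c :: electedPrefix E α else [] := by
  by_cases h : c ∈ E <;> simp [electedPrefix, h]

theorem topOf_eq_some_iff :
    topOf E α = some d ↔ ∃ u v, α = u ++ d :: v ∧ (∀ e ∈ u, e ∈ E) ∧ d ∉ E := by
  simp only [topOf, List.find?_eq_some_iff_append, decide_not, Bool.not_eq_eq_eq_not,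
    Bool.not_true, decide_eq_false_iff_not, Bool.not_not, decide_eq_true_eq]
  tauto

theorem not_mem_of_topOf_eq_some (h : topOf E α = some d) : d ∉ E := by
  obtain ⟨-, -, -, -, hd⟩ := topOf_eq_some_iff.mp h
  exact hd

theorem topOf_eq_none_iff : topOf E α = none ↔ ∀ e ∈ α, e ∈ E := by
  simp [topOf, List.find?_eq_none]

theorem mem_of_mem_electedPrefix {e : C} (he : e ∈ electedPrefix E α) : e ∈ E := by
  simpa using List.mem_takeWhile_imp he

theorem electedPrefix_of_forall_mem (h : ∀ e ∈ α, e ∈ E) : electedPrefix E α = α :=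
  List.takeWhile_eq_self_iff.mpr (by simpa using h)

theorem electedPrefix_append_cons {u v : List C} (hu : ∀ e ∈ u, e ∈ E) (hd : d ∉ E) :
    electedPrefix E (u ++ d :: v) = u := by
  induction u with
  | nil => simp [electedPrefix_cons, hd]
  | cons c u ih => simp [electedPrefix_cons, hu c (by simp), ih fun e he => hu e (by simp [he])]

theorem topOf_insert_of_ne (h : topOf E α ≠ some j) : topOf (insert j E) α = topOf E α := by
  induction α with
  | nil => rfl
  | cons c α ih =>
    by_cases hc : c ∈ E
    · simp_all [topOf_cons]
    · have hcj : c ≠ j := by rintro rfl; simp [topOf_cons, hc] at h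
      simp [topOf_cons, hc, hcj]

theorem electedPrefix_insert_of_ne (h : topOf E α ≠ some j) :
    electedPrefix (insert j E) α = electedPrefix E α := by
  induction α with
  | nil => rfl
  | cons c α ih =>
    by_cases hc : c ∈ E
    · simp_all [topOf_cons, electedPrefix_cons]
    · have hcj : c ≠ j := by rintro rfl; simp [topOf_cons, hc] at h
      simp [electedPrefix_cons, hc, hcj]

theorem mem_electedPrefix_insert (h : topOf E α = some j) :
    j ∈ electedPrefix (insert j E) α := by
  obtain ⟨u, v, rfl, hu, -⟩ := topOf_eq_some_iff.mp h
  clear h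
  induction u with
  | nil => simp [electedPrefix_cons]
  | cons c u ih => simp [electedPrefix_cons, hu c (by simp), ih fun e he => hu e (by simp [he])]

theorem Favours.eq_of_not_mem (hf : Favours A α α') (hA : A ∉ α') : α' = α := by
  have hAα : A ∉ α := fun h => hA (hf.2 h).1
  simpa [List.erase_of_not_mem hA, List.erase_of_not_mem hAα] using hf.1

theorem Favours.isPrefix {q : List C} (hf : Favours A α α') (hq : q <+: α') (hAq : A ∉ q) :
    q <+: α := by
  obtain ⟨t, rfl⟩ := hq
  have hq' : q <+: α.erase A := by
    rw [← hf.1, List.erase_append_right t hAq]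
    exact List.prefix_append _ _
  by_cases hAα : A ∈ α
  · obtain ⟨s, s', hAs, rfl, herase⟩ := List.exists_erase_eq hAα
    have hidx := (hf.2 hAα).2
    rw [List.idxOf_append_of_notMem hAq, List.idxOf_append_of_notMem hAs,
      List.idxOf_cons_self] at hidx
    rw [herase] at hq'
    exact (List.prefix_of_prefix_length_le hq' (List.prefix_append s s') (by omega)).trans
      (List.prefix_append _ _)
  · rwa [List.erase_of_not_mem hAα] at hq'

theorem Favours.topOf_eq (hf : Favours A α α') (hA : A ∉ E') (hE : E' ⊆ E)
    (htop : ∀ d, topOf E' α' = some d → d ∉ E ∧ d ≠ A) :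
    topOf E α = topOf E' α' ∧ electedPrefix E α = electedPrefix E' α' := by
  cases h : topOf E' α' with
  | none =>
    have hα' := topOf_eq_none_iff.mp h
    have hα : ∀ e ∈ α', e ∈ E := fun e he => hE (hα' e he)
    rw [← hf.eq_of_not_mem fun hA' => hA (hα' A hA')]
    exact ⟨topOf_eq_none_iff.mpr hα,
      by rw [electedPrefix_of_forall_mem hα, electedPrefix_of_forall_mem hα']⟩
  | some d =>
    obtain ⟨hdE, hdA⟩ := htop d h
    obtain ⟨u, v, rfl, hu, hdE'⟩ := topOf_eq_some_iff.mp h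
    have hAu : A ∉ u ++ [d] := by
      simpa [not_or] using ⟨fun h => hA (hu A h), hdA.symm⟩
    obtain ⟨γ, rfl⟩ := hf.isPrefix ⟨v, by simp⟩ hAu
    have hu' : ∀ e ∈ u, e ∈ E := fun e he => hE (hu e he)
    simp only [List.append_assoc, List.cons_append, List.nil_append]
    exact ⟨topOf_eq_some_iff.mpr ⟨u, γ, rfl, hu', hdE⟩,
      by rw [electedPrefix_append_cons hu' hdE, electedPrefix_append_cons hu hdE']⟩

end Ballot

section Run

variable {C : Type} [Fintype C] [DecidableEq C] {n : ℕ} {b : Fin n → List C}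
  {E : Finset C} {r : Fin n → ℚ} {c e i : C} {l L : List C} {k : Fin n} {t : ℚ}

theorem mem_poCounted : k ∈ poCounted b E i ↔ topOf E (b k) = some i := by
  simp [poCounted]

theorem poLoads_cons_of_topOf_eq (h : topOf l.toFinset (b k) = some i) :
    poLoads b (i :: l) k = poT b (poLoads b l) l.toFinset i := by
  simp [poLoads, h]

theorem poLoads_cons_of_topOf_ne (h : topOf l.toFinset (b k) ≠ some i) :
    poLoads b (i :: l) k = poLoads b l k := by
  simp [poLoads, h]

theorem sum_poCounted_sub_eq (h : 0 < #(poCounted b E i)) :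
    ∑ k ∈ poCounted b E i, (t - r k) = #(poCounted b E i) * (t - poT b r E i) + 1 := by
  have hc : (#(poCounted b E i) : ℚ) ≠ 0 := by positivity
  rw [sum_sub_distrib, sum_const, nsmul_eq_mul, poT]
  field_simp
  ring

theorem poT_le_of_one_le_sum (h : 1 ≤ ∑ k ∈ poCounted b E i, (t - r k)) :
    0 < #(poCounted b E i) ∧ poT b r E i ≤ t := by
  have hc : 0 < #(poCounted b E i) := by
    by_contra h0
    norm_num [card_eq_zero.mp (Nat.eq_zero_of_not_pos h0)] at h
  have hcq : (0 : ℚ) < #(poCounted b E i) := by exact_mod_cast hc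
  rw [sum_poCounted_sub_eq hc] at h
  exact ⟨hc, by nlinarith⟩

theorem le_poT_iff (hc : 0 < #(poCounted b E i)) :
    t ≤ poT b r E i ↔ ∑ k ∈ poCounted b E i, (t - r k) ≤ 1 := by
  have hcq : (0 : ℚ) < #(poCounted b E i) := by exact_mod_cast hc
  rw [sum_poCounted_sub_eq hc]
  constructor
  · intro h; nlinarith
  · intro h; by_contra h'; nlinarith

theorem poValid.of_isSuffix (h : poValid b L) (hs : l <:+ L) : poValid b l := by
  obtain ⟨t, rfl⟩ := hs
  induction t with
  | nil => exact h
  | cons c t ih => exact ih h.1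

theorem poValid.nodup (h : poValid b l) : l.Nodup := by
  induction l with
  | nil => exact List.nodup_nil
  | cons i l ih => exact List.nodup_cons.mpr ⟨h.2.1, ih h.1⟩

theorem sum_poLoads (h : poValid b l) : ∑ k, poLoads b l k = l.length := by
  induction l with
  | nil => simp [poLoads]
  | cons i l ih =>
    set S := poCounted b l.toFinset i
    set t := poT b (poLoads b l) l.toFinset i
    have hstep : ∀ k, poLoads b (i :: l) k =
        poLoads b l k + if k ∈ S then t - poLoads b l k else 0 := by
      intro k
      by_cases hk : k ∈ S
      · rw [if_pos hk, poLoads_cons_of_topOf_eq (mem_poCounted.mp hk)]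
        ring
      · rw [if_neg hk, poLoads_cons_of_topOf_ne (mt mem_poCounted.mpr hk), add_zero]
    have hone : ∑ k ∈ S, (t - poLoads b l k) = 1 := by
      simp [S, t, sum_poCounted_sub_eq h.2.2.1]
    simp only [hstep, sum_add_distrib, sum_ite_mem, univ_inter, hone, ih h.1,
      List.length_cons]
    push_cast
    ring

def poLastTime (b : Fin n → List C) : List C → ℚ
  | [] => 0
  | i :: l => poT b (poLoads b l) l.toFinset i

def poTime (b : Fin n → List C) : List C → C → ℚ
  | [], _ => 0
  | i :: l, e => if e = i then poLastTime b (i :: l) else poTime b l e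

theorem poTime_cons_self : poTime b (i :: l) i = poLastTime b (i :: l) := by
  simp [poTime]

theorem poTime_cons_of_ne (h : e ≠ i) : poTime b (i :: l) e = poTime b l e := by
  simp [poTime, h]

theorem sum_poCounted_cons_sub_eq {j : C} (hij : i ≠ j) :
    ∑ k ∈ poCounted b (j :: l).toFinset i, (poLastTime b (j :: l) - poLoads b (j :: l) k) =
      ∑ k ∈ poCounted b l.toFinset i, (poLastTime b (j :: l) - poLoads b l k) := by
  have hinsert : ∀ k, topOf l.toFinset (b k) ≠ some j →
      topOf (j :: l).toFinset (b k) = topOf l.toFinset (b k) := fun k hk => by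
    rw [List.toFinset_cons, topOf_insert_of_ne hk]
  have hne : ∀ k ∈ poCounted b l.toFinset i, topOf l.toFinset (b k) ≠ some j := by
    intro k hk
    simpa [mem_poCounted.mp hk] using hij
  rw [← sum_subset fun k hk =>
    mem_poCounted.mpr ((hinsert k (hne k hk)).trans (mem_poCounted.mp hk))]
  · exact sum_congr rfl fun k hk => by rw [poLoads_cons_of_topOf_ne (hne k hk)]
  · -- a ballot newly counted for `i` was counted for `j`, so its load is `j`'s time
    intro k hk hk0
    have hkj : topOf l.toFinset (b k) = some j := by
      by_contra hkj
      rw [mem_poCounted, hinsert k hkj] at hk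
      exact hk0 (mem_poCounted.mpr hk)
    rw [poLoads_cons_of_topOf_eq hkj, poLastTime, sub_self]

theorem poLastTime_le_cons (h : poValid b (i :: l)) :
    poLastTime b l ≤ poLastTime b (i :: l) := by
  obtain ⟨hl, hil, hci, -⟩ := h
  cases l with
  | nil =>
    simp only [poLastTime, poT, poLoads, sum_const_zero, add_zero]
    positivity
  | cons j l =>
    change poLastTime b (j :: l) ≤ poT b (poLoads b (j :: l)) (j :: l).toFinset i
    rw [le_poT_iff hci, sum_poCounted_cons_sub_eq fun h : i = j => hil (h ▸ List.mem_cons_self)]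
    rcases Nat.eq_zero_or_pos #(poCounted b l.toFinset i) with hc0 | hc0
    · simp [card_eq_zero.mp hc0]
    · exact (le_poT_iff hc0).mp (hl.2.2.2 i (fun h => hil (List.mem_cons_of_mem _ h)) hc0)

theorem poLastTime_nonneg (h : poValid b l) : 0 ≤ poLastTime b l := by
  induction l with
  | nil => exact le_rfl
  | cons i l ih => exact (ih h.1).trans (poLastTime_le_cons h)

theorem poTime_le_poLastTime (h : poValid b l) (e : C) : poTime b l e ≤ poLastTime b l := by
  induction l with
  | nil => exact le_rfl
  | cons i l ih =>
    by_cases hei : e = i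
    · rw [hei, poTime_cons_self]
    · rw [poTime_cons_of_ne hei]
      exact (ih h.1).trans (poLastTime_le_cons h)

theorem poTime_of_isSuffix (hL : L.Nodup) (hs : l <:+ L) (he : e ∈ l) :
    poTime b L e = poTime b l e := by
  induction L with
  | nil => rw [List.suffix_nil.mp hs]
  | cons x L ih =>
    rcases List.suffix_cons_iff.mp hs with rfl | hs
    · rfl
    · have hex : e ≠ x := fun h => (List.nodup_cons.mp hL).1 (h ▸ hs.subset he)
      rw [poTime_cons_of_ne hex, ih (List.nodup_cons.mp hL).2 hs]

theorem poTime_of_cons_isSuffix (hL : L.Nodup) (hs : c :: l <:+ L) :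
    poTime b L c = poLastTime b (c :: l) := by
  rw [poTime_of_isSuffix hL hs List.mem_cons_self, poTime_cons_self]

theorem poTime_le_of_isSuffix (hL : poValid b L) (hs : c :: l <:+ L) (he : e ∈ c :: l) :
    poTime b L e ≤ poTime b L c := by
  rw [poTime_of_isSuffix hL.nodup hs he, poTime_of_cons_isSuffix hL.nodup hs]
  exact poTime_le_poLastTime (hL.of_isSuffix hs) e

theorem poLoads_eq_maxOf (h : poValid b l) (k : Fin n) :
    poLoads b l k = maxOf (poTime b l) (electedPrefix l.toFinset (b k)) := by
  induction l with
  | nil => cases b k <;> simp [poLoads, electedPrefix, maxOf]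
  | cons i l ih =>
    by_cases htop : topOf l.toFinset (b k) = some i
    · rw [poLoads_cons_of_topOf_eq htop]
      refine le_antisymm ?_ (maxOf_le (fun e _ => poTime_le_poLastTime h e)
        (poLastTime_nonneg h))
      change poLastTime b (i :: l) ≤ _
      rw [← poTime_cons_self, List.toFinset_cons]
      exact le_maxOf (mem_electedPrefix_insert htop)
    · rw [poLoads_cons_of_topOf_ne htop, ih h.1, List.toFinset_cons,
        electedPrefix_insert_of_ne htop]
      refine maxOf_congr fun e he => (poTime_cons_of_ne ?_).symm
      rintro rfl
      exact h.2.1 (List.mem_toFinset.mp (mem_of_mem_electedPrefix he))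

theorem poLoads_le (h : poValid b l) (ht : ∀ e ∈ l, poTime b l e ≤ t) (ht0 : 0 ≤ t)
    (k : Fin n) : poLoads b l k ≤ t := by
  rw [poLoads_eq_maxOf h]
  exact maxOf_le (fun e he => ht e (List.mem_toFinset.mp (mem_of_mem_electedPrefix he))) ht0

theorem POUniqueRun.eq_of_poT_le {M : ℕ} (hu : POUniqueRun b M) (hv : poValid b (c :: l))
    (hlen : l.length < M) {w : C} (hwl : w ∉ l) (hw : 0 < #(poCounted b l.toFinset w))
    (hle : poT b (poLoads b l) l.toFinset w ≤ poT b (poLoads b l) l.toFinset c) : w = c := by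
  obtain ⟨hl, hcl, hcc, hcmin⟩ := hv
  exact (hu l hl hlen).unique ⟨hwl, hw, fun j hj hcj => hle.trans (hcmin j hj hcj)⟩
    ⟨hcl, hcc, hcmin⟩

end Run

section Monotonicity

variable {C : Type} [Fintype C] [DecidableEq C] {n : ℕ} {b b' : Fin n → List C} {A : C}
  {l l' L l₀ : List C}

theorem topOf_eq_and_poLoads_le_of_favours (hfav : ∀ k, Favours A (b k) (b' k))
    (hl : poValid b l) (hl' : poValid b' l') (hA : A ∉ l')
    (hsub : ∀ e ∈ l', e ∈ l ∧ poTime b l e ≤ poTime b' l' e) {k : Fin n}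
    (htop : ∀ d, topOf l'.toFinset (b' k) = some d → d ∉ l ∧ d ≠ A) :
    topOf l.toFinset (b k) = topOf l'.toFinset (b' k) ∧ poLoads b l k ≤ poLoads b' l' k := by
  obtain ⟨htop_eq, hpre⟩ := (hfav k).topOf_eq (E := l.toFinset) (E' := l'.toFinset)
    (by simpa using hA) (fun e he => by simpa using (hsub e (by simpa using he)).1)
    (fun d hd => by simpa using htop d hd)
  refine ⟨htop_eq, ?_⟩
  rw [poLoads_eq_maxOf hl, poLoads_eq_maxOf hl', hpre]
  exact maxOf_mono fun e he => (hsub e (List.mem_toFinset.mp (mem_of_mem_electedPrefix he))).2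

theorem exists_poT_le_poLastTime (hfav : ∀ k, Favours A (b k) (b' k)) (hL : poValid b L)
    (hl : poValid b' l) (hAL : A ∈ L) (hAl : A ∉ l)
    (hsub : ∀ e ∈ l, e ∈ L ∧ poTime b L e ≤ poTime b' l e) :
    ∃ x, x ∉ l ∧ 0 < #(poCounted b' l.toFinset x) ∧
      poT b' (poLoads b' l) l.toFinset x ≤ poLastTime b L := by
  set W := L.toFinset \ l.toFinset
  set tA := poLastTime b L
  have hW : (#W : ℚ) = L.length - l.length := by
    have hlL : l.toFinset ⊆ L.toFinset := fun e he => by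
      simpa using (hsub e (by simpa using he)).1
    rw [card_sdiff_of_subset hlL, Nat.cast_sub (card_le_card hlL),
      List.toFinset_card_of_nodup hL.nodup, List.toFinset_card_of_nodup hl.nodup]
  have hpt : ∀ k, poLoads b L k - poLoads b' l k ≤
      ∑ x ∈ W, if topOf l.toFinset (b' k) = some x then tA - poLoads b' l k else 0 := by
    intro k
    cases htop : topOf l.toFinset (b' k) with
    | none =>
      simpa using (topOf_eq_and_poLoads_le_of_favours hfav hL hl hAl hsub
        fun d hd => by simp [htop] at hd).2
    | some d =>
      simp only [Option.some.injEq, sum_ite_eq]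
      split_ifs with hd
      · linarith [poLoads_le hL (fun e _ => poTime_le_poLastTime hL e) (poLastTime_nonneg hL) k]
      · have hdl : d ∉ l := by simpa using not_mem_of_topOf_eq_some htop
        have hdL : d ∉ L := fun h => hd (by simp [W, h, hdl])
        have hdA : d ≠ A := by rintro rfl; exact hd (by simp [W, hAL, hAl])
        have := topOf_eq_and_poLoads_le_of_favours hfav hL hl hAl hsub (k := k) fun d' hd' => by
          rw [htop, Option.some.injEq] at hd'
          exact hd' ▸ ⟨hdL, hdA⟩
        linarith [this.2]
  have hledger : ∑ _x ∈ W, (1 : ℚ) ≤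
      ∑ x ∈ W, ∑ k ∈ poCounted b' l.toFinset x, (tA - poLoads b' l k) := by
    calc ∑ _x ∈ W, (1 : ℚ) = ∑ k, (poLoads b L k - poLoads b' l k) := by
          rw [sum_sub_distrib, sum_poLoads hL, sum_poLoads hl, ← hW]; simp
      _ ≤ ∑ k, ∑ x ∈ W,
            if topOf l.toFinset (b' k) = some x then tA - poLoads b' l k else 0 :=
          sum_le_sum fun k _ => hpt k
      _ = _ := by rw [sum_comm]; simp only [poCounted, sum_filter]
  obtain ⟨x, hxW, hx⟩ := exists_le_of_sum_le ⟨A, by simp [W, hAL, hAl]⟩ hledger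
  exact ⟨x, by simpa [W] using (mem_sdiff.mp hxW).2, poT_le_of_one_le_sum hx⟩

theorem exists_cons_isSuffix_poTime_le (hL : poValid b (A :: l₀)) (t : ℚ) :
    ∃ c lp, c :: lp <:+ A :: l₀ ∧ (c = A ∨ t < poTime b (A :: l₀) c) ∧
      (∀ e ∈ lp, poTime b (A :: l₀) e ≤ t) ∧
      ∀ e ∈ l₀, poTime b (A :: l₀) e ≤ t → e ∈ lp := by
  set p : C → Bool := fun e => decide (t < poTime b (A :: l₀) e)
  obtain ⟨c, hc, hs⟩ :
      ∃ c ∈ A :: l₀.takeWhile p, c :: l₀.dropWhile p <:+ A :: l₀ := by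
    obtain ⟨init, c, h⟩ := (List.eq_nil_or_concat (A :: l₀.takeWhile p)).resolve_left
      (List.cons_ne_nil _ _)
    refine ⟨c, by simp [h], init, ?_⟩
    rw [← List.takeWhile_append_dropWhile (p := p) (l := l₀), ← List.cons_append, h]
    simp
  refine ⟨c, l₀.dropWhile p, hs, ?_, ?_, ?_⟩
  · rcases List.mem_cons.mp hc with h | h
    · exact Or.inl h
    · exact Or.inr (by simpa [p] using List.mem_takeWhile_imp h)
  · intro e he
    rcases hd : l₀.dropWhile p with _ | ⟨d, rest⟩
    · simp [hd] at he
    · have hdt : ¬ t < poTime b (A :: l₀) d := by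
        simpa [hd, p] using List.head_dropWhile_not p (l := l₀) (by simp [hd])
      have hs' : d :: rest <:+ A :: l₀ :=
        hd ▸ (List.dropWhile_suffix p).trans (List.suffix_cons A l₀)
      exact (poTime_le_of_isSuffix hL hs' (hd ▸ he)).trans (not_lt.mp hdt)
  · intro e he het
    rw [← List.takeWhile_append_dropWhile (p := p) (l := l₀)] at he
    rcases List.mem_append.mp he with h | h
    · exact absurd (List.mem_takeWhile_imp h) (by simpa [p] using het)
    · exact h

theorem poT_le_poLastTime_of_favours (hfav : ∀ k, Favours A (b k) (b' k)) {w : C}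
    (hl : poValid b l) (hw : poValid b' (w :: l')) (hA : A ∉ w :: l')
    (hsub : ∀ e ∈ l', e ∈ l ∧ poTime b l e ≤ poTime b' l' e) (hwl : w ∉ l)
    (hl_le : ∀ e ∈ l, poTime b l e ≤ poLastTime b' (w :: l')) :
    0 < #(poCounted b l.toFinset w) ∧
      poT b (poLoads b l) l.toFinset w ≤ poLastTime b' (w :: l') := by
  set t' := poLastTime b' (w :: l')
  have hwA : w ≠ A := fun h => hA (h ▸ List.mem_cons_self)
  have htransfer : ∀ k ∈ poCounted b' l'.toFinset w,
      k ∈ poCounted b l.toFinset w ∧ poLoads b l k ≤ poLoads b' l' k := by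
    intro k hk
    rw [mem_poCounted] at hk ⊢
    have := topOf_eq_and_poLoads_le_of_favours hfav hl hw.1
      (fun h => hA (List.mem_cons_of_mem _ h)) hsub (k := k) fun d hd => by
        rw [hk, Option.some.injEq] at hd
        exact hd ▸ ⟨hwl, hwA⟩
    exact ⟨this.1.trans hk, this.2⟩
  apply poT_le_of_one_le_sum
  calc (1 : ℚ) = ∑ k ∈ poCounted b' l'.toFinset w, (t' - poLoads b' l' k) := by
        rw [sum_poCounted_sub_eq hw.2.2.1]
        simp [t', poLastTime]
    _ ≤ ∑ k ∈ poCounted b' l'.toFinset w, (t' - poLoads b l k) :=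
        sum_le_sum fun k hk => by linarith [(htransfer k hk).2]
    _ ≤ ∑ k ∈ poCounted b l.toFinset w, (t' - poLoads b l k) :=
        sum_le_sum_of_subset_of_nonneg (fun k hk => (htransfer k hk).1) fun k _ _ =>
          sub_nonneg.mpr (poLoads_le hl hl_le (poLastTime_nonneg hw) k)

theorem mem_and_poTime_le_of_favours (hfav : ∀ k, Favours A (b k) (b' k)) {M : ℕ}
    (hu : POUniqueRun b M) (hL : poValid b (A :: l₀)) (hLM : (A :: l₀).length ≤ M) {w : C}
    (hw : poValid b' (w :: l')) (hA : A ∉ w :: l')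
    (hinv : ∀ e ∈ l', e ∈ l₀ ∧ poTime b (A :: l₀) e ≤ poTime b' l' e) :
    w ∈ l₀ ∧ poTime b (A :: l₀) w ≤ poLastTime b' (w :: l') := by
  set t' := poLastTime b' (w :: l')
  have hwA : w ≠ A := fun h => hA (h ▸ List.mem_cons_self)
  have ht'A : t' ≤ poLastTime b (A :: l₀) := by
    obtain ⟨x, hx, hcx, hxt⟩ := exists_poT_le_poLastTime hfav hL hw.1 List.mem_cons_self
      (fun h => hA (List.mem_cons_of_mem _ h))
      fun e he => ⟨List.mem_cons_of_mem _ (hinv e he).1, (hinv e he).2⟩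
    exact (hw.2.2.2 x hx hcx).trans hxt
  have hl't' : ∀ e ∈ l', poTime b (A :: l₀) e ≤ t' := fun e he =>
    (hinv e he).2.trans ((poTime_le_poLastTime hw.1 e).trans (poLastTime_le_cons hw))
  by_contra hbad
  obtain ⟨c, lp, hs, hc, hlp_le, hlp_mem⟩ := exists_cons_isSuffix_poTime_le hL t'
  have hlps : lp <:+ A :: l₀ := (List.suffix_cons c lp).trans hs
  have hlp : poValid b lp := hL.of_isSuffix hlps
  have hlpL : ∀ e ∈ lp, poTime b lp e = poTime b (A :: l₀) e := fun e he =>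
    (poTime_of_isSuffix hL.nodup hlps he).symm
  have hwlp : w ∉ lp := fun h =>
    hbad ⟨(List.mem_cons.mp (hlps.subset h)).resolve_left hwA, hlp_le w h⟩
  obtain ⟨hcw, hwt⟩ := poT_le_poLastTime_of_favours hfav hlp hw hA
    (fun e he => ⟨hlp_mem e (hinv e he).1 (hl't' e he), by
      rw [hlpL e (hlp_mem e (hinv e he).1 (hl't' e he))]; exact (hinv e he).2⟩)
    hwlp fun e he => by rw [hlpL e he]; exact hlp_le e he
  have htc : poTime b (A :: l₀) c = poT b (poLoads b lp) lp.toFinset c :=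
    poTime_of_cons_isSuffix hL.nodup hs
  have ht'c : t' ≤ poT b (poLoads b lp) lp.toFinset c := by
    rcases hc with rfl | hc
    · rwa [← htc, poTime_cons_self]
    · exact htc ▸ hc.le
  have hlen : lp.length < M := by
    have := hs.length_le
    simp only [List.length_cons] at this hLM
    omega
  obtain rfl : w = c := hu.eq_of_poT_le (hL.of_isSuffix hs) hlen hwlp hcw (hwt.trans ht'c)
  rcases hc with rfl | hc
  · exact hwA rfl
  · linarith

theorem forall_mem_and_poTime_le_of_favours (hfav : ∀ k, Favours A (b k) (b' k)) {M : ℕ}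
    (hu : POUniqueRun b M) (hL : poValid b (A :: l₀)) (hLM : (A :: l₀).length ≤ M)
    (hl' : poValid b' l') (hA : A ∉ l') :
    ∀ e ∈ l', e ∈ l₀ ∧ poTime b (A :: l₀) e ≤ poTime b' l' e := by
  induction l' with
  | nil => simp
  | cons w l' ih =>
    have ih' := ih hl'.1 fun h => hA (List.mem_cons_of_mem _ h)
    intro e he
    by_cases hew : e = w
    · rw [hew, poTime_cons_self]
      exact mem_and_poTime_le_of_favours hfav hu hL hLM hl' hA ih'
    · rw [poTime_cons_of_ne hew]
      exact ih' e ((List.mem_cons.mp he).resolve_left hew)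

theorem mem_of_favours (hfav : ∀ k, Favours A (b k) (b' k)) {M : ℕ} (hu : POUniqueRun b M)
    (hL : poValid b (A :: l₀)) (hLM : (A :: l₀).length ≤ M) (hl' : poValid b' l')
    (hl'M : l'.length = M) : A ∈ l' := by
  by_contra hA
  have hsub : l'.toFinset ⊆ l₀.toFinset := fun e he => List.mem_toFinset.mpr
    (forall_mem_and_poTime_le_of_favours hfav hu hL hLM hl' hA e (List.mem_toFinset.mp he)).1
  have hcard := card_le_card hsub
  rw [List.toFinset_card_of_nodup hl'.nodup, hl'M] at hcard
  have := l₀.toFinset_card_le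
  simp only [List.length_cons] at hLM
  omega

end Monotonicity

section Padding

variable {C : Type} {n n' : ℕ} {b : Fin n → List C}

def padProfile (b : Fin n → List C) (n' : ℕ) : Fin n' → List C :=
  fun k => if h : (k : ℕ) < n then b ⟨k, h⟩ else []

theorem padProfile_castLE (hnn : n ≤ n') (k : Fin n) :
    padProfile b n' (Fin.castLE hnn k) = b k := by
  simp [padProfile]

variable [Fintype C] [DecidableEq C] {E : Finset C} {i : C}

theorem poCounted_padProfile (hnn : n ≤ n') :
    poCounted (padProfile b n') E i = (poCounted b E i).map (Fin.castLEEmb hnn) := by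
  ext k
  simp only [mem_poCounted, mem_map, Fin.castLEEmb_apply]
  constructor
  · intro hk
    by_cases h : (k : ℕ) < n
    · exact ⟨⟨k, h⟩, by simpa [padProfile, h] using hk, rfl⟩
    · simp [padProfile, h, topOf] at hk
  · rintro ⟨k, hk, rfl⟩
    rwa [padProfile_castLE]

theorem poT_padProfile (hnn : n ≤ n') {r : Fin n → ℚ} {r' : Fin n' → ℚ}
    (hr : ∀ k, r' (Fin.castLE hnn k) = r k) : poT (padProfile b n') r' E i = poT b r E i := by
  simp [poT, poCounted_padProfile hnn, hr]

theorem poLoads_padProfile (hnn : n ≤ n') (l : List C) (k : Fin n) :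
    poLoads (padProfile b n') l (Fin.castLE hnn k) = poLoads b l k := by
  induction l generalizing k with
  | nil => rfl
  | cons i l ih => simp only [poLoads, padProfile_castLE, poT_padProfile hnn ih, ih]

theorem poValid_padProfile_iff (hnn : n ≤ n') {l : List C} :
    poValid (padProfile b n') l ↔ poValid b l := by
  induction l with
  | nil => exact Iff.rfl
  | cons i l ih =>
    simp only [poValid, ih, poCounted_padProfile hnn, card_map,
      poT_padProfile hnn (poLoads_padProfile hnn l)]

theorem POUniqueRun.padProfile {M : ℕ} (hnn : n ≤ n') (hu : POUniqueRun b M) :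
    POUniqueRun (padProfile b n') M := by
  intro l hl hlen
  simpa only [poCounted_padProfile hnn, card_map,
    poT_padProfile hnn (poLoads_padProfile hnn l)] using
    hu l ((poValid_padProfile_iff hnn).mp hl) hlen

end Padding

theorem stmt_8_general {C : Type} [Fintype C] [DecidableEq C] (n n' : ℕ) (hnn : n ≤ n')
    (b : Fin n → List C) (b' : Fin n' → List C)
    (A : C) (M : ℕ)
    (hch : ∀ k : Fin n', if h : (k : ℕ) < n then Favours A (b ⟨k, h⟩) (b' k)
      else b' k = [A])
    (hu : POUniqueRun b M)
    (h : ∃ S : Finset C, POOutcome b M S ∧ A ∈ S) :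
    ∀ S' : Finset C, POOutcome b' M S' → A ∈ S' := by
  rintro S' ⟨l', hl', hl'M, rfl⟩
  obtain ⟨S, ⟨l, hl, hlM, rfl⟩, hA⟩ := h
  obtain ⟨u, l₀, rfl⟩ := List.append_of_mem (List.mem_toFinset.mp hA)
  have hfav : ∀ k, Favours A (padProfile b n' k) (b' k) := by
    intro k
    have hk := hch k
    unfold padProfile
    split_ifs at hk ⊢
    · exact hk
    · simp [Favours, hk]
  have hL : poValid (padProfile b n') (A :: l₀) :=
    (poValid_padProfile_iff hnn).mpr (hl.of_isSuffix (List.suffix_append u _))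
  refine List.mem_toFinset.mpr (mem_of_favours hfav (hu.padProfile hnn) hL ?_ hl' hl'M)
  simp only [List.length_append, List.length_cons] at hlM ⊢
  omega

/-- Monotonicity of Phragmén's ordered method in the absence of ties: let the ordered
profile `b'` be obtained from `b` by adding new ballots consisting of the single
candidate `A`, inserting `A` into some ballots not containing `A`, or moving `A`
to an earlier position on some ballots containing `A` (others unchanged).  Assume
no ties occur in any round under either profile.  If `A` is among the `M`
candidates elected on `b`, then `A` is among the `M` candidates elected on `b'`. -/
theorem stmt_8 {C : Type} [Fintype C] [DecidableEq C] (n n' : ℕ) (hnn : n ≤ n')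
    (b : Fin n → List C) (b' : Fin n' → List C)
    (hb : ∀ k, (b k).Nodup) (hb' : ∀ k, (b' k).Nodup)
    (hbne : ∀ k, b k ≠ []) (hbne' : ∀ k, b' k ≠ [])
    (A : C) (M : ℕ) (hM1 : 1 ≤ M) (hM2 : M ≤ Fintype.card C)
    (hch : ∀ k : Fin n', if h : (k : ℕ) < n then Favours A (b ⟨k, h⟩) (b' k)
      else b' k = [A])
    (hu : POUniqueRun b M) (hu' : POUniqueRun b' M)
    (h : ∃ S : Finset C, POOutcome b M S ∧ A ∈ S) :
    ∀ S' : Finset C, POOutcome b' M S' → A ∈ S' :=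
  stmt_8_general n n' hnn b b' A M hch hu h
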